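/- Let 𝒢_∧ = (G, o, ∧, R_1, …, R_n) be a functional Menger ∧-algebra of rank n and let H be a nonempty subset of G. Then H is a stabilizer of 𝒢_∧ if and only if H is a stable, ∧-stable and v-unitary subset of G such that R_i H ⊆ H for every i ∈ {1,…,n}. -/

import Mathlib

universe u

/-- A functional Menger system of rank `n`: an `(n+1)`-ary operation `o`
(written `x[y₁…yₙ]` in the paper) and `n` unary operations `R i`,
satisfying axioms A1–A7. -/
structure MengerSystem (n : ℕ) (G : Type u) where
  o : G → (Fin n → G) → G
  R : Fin n → G → G
  A1 : ∀ (x : G) (y z : Fin n → G),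
    o (o x y) z = o x fun i => o (y i) z
  A2 : ∀ x : G, o x (fun i => R i x) = x
  A3 : ∀ (x : G) (u : Fin n → G) (i : Fin n) (z y : G),
    o (o x (Function.update u i z)) (fun j => R j y)
      = o x (Function.update u i (o z fun j => R j y))
  A4 : ∀ (i : Fin n) (x y : G),
    R i (o x fun j => R j y) = o (R i x) fun j => R j y
  A5 : ∀ (x y z : G),
    o (o x fun j => R j y) (fun j => R j z)
      = o (o x fun j => R j z) (fun j => R j y)
  A6 : ∀ (i k : Fin n) (x : G) (y : Fin n → G),
    R i (o x y) = R i (o (R k x) y)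
  A7 : ∀ (i : Fin n) (x : G) (y : Fin n → G),
    o (R i x) y = o (y i) fun j => R j (o x y)

namespace MengerSystem

variable {n : ℕ} {G : Type u}

/-- `T_n(G)`: the least set of transformations of `G` containing the identity and
closed under `t ↦ (x ↦ a[b̄|ᵢ t x])` and `t ↦ (x ↦ Rᵢ (t x))`. -/
inductive IsTn (M : MengerSystem n G) : (G → G) → Prop
  | id : IsTn M id
  | op (t : G → G) (a : G) (b : Fin n → G) (i : Fin n) :
      IsTn M t → IsTn M fun x => M.o a (Function.update b i (t x))
  | proj (t : G → G) (i : Fin n) :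
      IsTn M t → IsTn M fun x => M.R i (t x)

/-- quasi-stable: `x ∈ H → x[x…x] ∈ H`. -/
def QuasiStable (M : MengerSystem n G) (H : Set G) : Prop :=
  ∀ x ∈ H, M.o x (fun _ => x) ∈ H

/-- l-unitary: `x[y…y] ∈ H ∧ y ∈ H → x ∈ H`. -/
def LUnitary (M : MengerSystem n G) (H : Set G) : Prop :=
  ∀ x y : G, M.o x (fun _ => y) ∈ H → y ∈ H → x ∈ H

/-- normal v-complex: `x, y ∈ H ∧ t x ∈ H → t y ∈ H` for all `t ∈ T_n(G)`. -/
def NormalVComplex (M : MengerSystem n G) (H : Set G) : Prop :=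
  ∀ t : G → G, M.IsTn t → ∀ x ∈ H, ∀ y ∈ H, t x ∈ H → t y ∈ H

/-- stable: `x, y₁, …, yₙ ∈ H → x[y₁…yₙ] ∈ H`. -/
def Stable (M : MengerSystem n G) (H : Set G) : Prop :=
  ∀ (x : G) (y : Fin n → G), x ∈ H → (∀ i, y i ∈ H) → M.o x y ∈ H

/-- v-unitary: `x[y₁…yₙ] ∈ H ∧ y₁, …, yₙ ∈ H → x ∈ H`. -/
def VUnitary (M : MengerSystem n G) (H : Set G) : Prop :=
  ∀ (x : G) (y : Fin n → G), M.o x y ∈ H → (∀ i, y i ∈ H) → x ∈ H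

/-- l-ideal: `x[y₁…yₙ] ∈ H` whenever some `yᵢ ∈ H`. -/
def LIdeal (M : MengerSystem n G) (H : Set G) : Prop :=
  ∀ (x : G) (y : Fin n → G), (∃ i, y i ∈ H) → M.o x y ∈ H

/-- the order `x ≤ y ↔ x = y[R₁x…Rₙx]` (the relation ζ). -/
def le (M : MengerSystem n G) (x y : G) : Prop :=
  x = M.o y fun i => M.R i x

/-- the quasi-order `x ⊏ y ↔ R₁x ≤ R₁y` (the relation χ). -/
def sub (M : MengerSystem n G) [NeZero n] (x y : G) : Prop :=
  M.le (M.R 0 x) (M.R 0 y)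

/-- v-regular binary relation. -/
def VRegular (M : MengerSystem n G) (ρ : G → G → Prop) : Prop :=
  ∀ (z : G) (x y : Fin n → G), (∀ i, ρ (x i) (y i)) → ρ (M.o z x) (M.o z y)

end MengerSystem

/-- An `n`-place function on `A`: a partial map from `Aⁿ` to `A`. -/
def NPlace (n : ℕ) (A : Type u) : Type u := (Fin n → A) → Part A

namespace NPlace

variable {n : ℕ} {A : Type u}

/-- Menger composition `f[g₁…gₙ]` of `n`-place functions. -/
def comp (f : NPlace n A) (g : Fin n → NPlace n A) : NPlace n A :=
  fun a =>
    (⟨∀ i, (g i a).Dom, fun h i => (g i a).get (h i)⟩ : Part (Fin n → A)).bind f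

/-- `Rᵢ f`: same domain as `f`, value `(Rᵢ f)(a₁,…,aₙ) = aᵢ`. -/
def Ri (i : Fin n) (f : NPlace n A) : NPlace n A :=
  fun a => (f a).map fun _ => a i

/-- Set-theoretic intersection of two `n`-place functions (as sets of pairs). -/
def inter (f g : NPlace n A) : NPlace n A :=
  fun a => ⟨(f a).Dom ∧ f a = g a, fun h => (f a).get h.1⟩

end NPlace

/-- A representation of a functional Menger system by `n`-place functions. -/
def MengerSystem.IsRep {n : ℕ} {G : Type u} (M : MengerSystem n G) {A : Type u}
    (P : G → NPlace n A) : Prop :=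
  (∀ (x : G) (y : Fin n → G), P (M.o x y) = NPlace.comp (P x) fun i => P (y i)) ∧
  (∀ (i : Fin n) (x : G), P (M.R i x) = NPlace.Ri i (P x))

/-- A nonempty `H ⊆ G` is a stabilizer of `M` if there are a representation `P`
on some set `A` and a point `a ∈ A` with `H = {g | P g (a,…,a) = a}`. -/
def MengerSystem.IsStabilizer {n : ℕ} {G : Type u} (M : MengerSystem n G)
    (H : Set G) : Prop :=
  ∃ (A : Type u) (P : G → NPlace n A) (a : A),
    M.IsRep P ∧ H = {g : G | a ∈ P g fun _ => a}

/-- A functional Menger ∧-algebra of rank `n`. -/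
structure MengerWAlgebra (n : ℕ) (G : Type u) extends MengerSystem n G where
  meet : G → G → G
  meet_comm : ∀ x y : G, meet x y = meet y x
  meet_assoc : ∀ x y z : G, meet (meet x y) z = meet x (meet y z)
  meet_idem : ∀ x : G, meet x x = x
  A8 : ∀ x y z : G,
    meet x (o y fun j => R j z) = o (meet x y) fun j => R j z
  A9 : ∀ x y : G, meet x y = o x fun j => R j (meet x y)
  A10 : ∀ (x y : G) (z : Fin n → G),
    o (meet x y) z = meet (o x z) (o y z)

/-- A representation of a functional Menger ∧-algebra by `n`-place functions. -/
def MengerWAlgebra.IsRep {n : ℕ} {G : Type u} (M : MengerWAlgebra n G) {A : Type u}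
    (P : G → NPlace n A) : Prop :=
  M.toMengerSystem.IsRep P ∧
  ∀ x y : G, P (M.meet x y) = NPlace.inter (P x) (P y)

/-- Stabilizers of a functional Menger ∧-algebra. -/
def MengerWAlgebra.IsStabilizer {n : ℕ} {G : Type u} (M : MengerWAlgebra n G)
    (H : Set G) : Prop :=
  ∃ (A : Type u) (P : G → NPlace n A) (a : A),
    M.IsRep P ∧ H = {g : G | a ∈ P g fun _ => a}

/-- ∧-stable subset. -/
def MengerWAlgebra.MeetStable {n : ℕ} {G : Type u} (M : MengerWAlgebra n G)
    (H : Set G) : Prop :=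
  ∀ x ∈ H, ∀ y ∈ H, M.meet x y ∈ H

/-! A representation makes its point stabilizer stable, ∧-stable, v-unitary and closed under
the `Rᵢ`, by direct computation. Conversely, call `g` defined when every `Rᵢ g ∈ H`, and say that
defined `x, y` agree when `x ∧ y` is defined. Two defined restrictions of a common element agree,
which makes agreement transitive; since composition preserves the restriction order coordinatewise,
agreement is a congruence for composition. Letting `g` act on agreement classes by
`[w̄] ↦ [g[w̄]]` where `g[w̄]` is defined gives a representation, and `H` is the stabilizer of the
class of any `h ∈ H`, because `g[h…h]` agrees with `h` iff it lies in `H`, iff `g ∈ H`. -/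

namespace NPlace

variable {n : ℕ} {A : Type u}

theorem comp_apply_of_mem {f : NPlace n A} {g : Fin n → NPlace n A} {a b : Fin n → A}
    (hb : ∀ i, b i ∈ g i a) : comp f g a = f b := by
  have hargs : (⟨∀ i, (g i a).Dom, fun h i => (g i a).get (h i)⟩ : Part (Fin n → A))
      = Part.some b :=
    Part.eq_some_iff.2 ⟨fun i => (hb i).fst, funext fun i => Part.get_eq_of_mem (hb i) _⟩
  rw [comp, hargs]
  exact Part.bind_some b f

theorem comp_apply_eq_none {f : NPlace n A} {g : Fin n → NPlace n A} {a : Fin n → A}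
    (h : ¬ ∀ i, (g i a).Dom) : comp f g a = Part.none :=
  Part.eq_none_iff'.2 fun hd => h hd.fst

theorem mem_inter {f g : NPlace n A} {a : Fin n → A} {b : A} (hf : b ∈ f a) (hg : b ∈ g a) :
    b ∈ inter f g a :=
  ⟨⟨hf.fst, (Part.eq_some_iff.2 hf).trans (Part.eq_some_iff.2 hg).symm⟩,
    Part.get_eq_of_mem hf _⟩

end NPlace

def pointStabilizer {n : ℕ} {G A : Type u} (P : G → NPlace n A) (a : A) : Set G :=
  {g | a ∈ P g fun _ => a}

theorem mem_pointStabilizer {n : ℕ} {G A : Type u} {P : G → NPlace n A} {a : A} {g : G} :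
    g ∈ pointStabilizer P a ↔ a ∈ P g fun _ => a :=
  Iff.rfl

namespace MengerSystem.IsRep

variable {n : ℕ} {G A : Type u} {M : MengerSystem n G} {P : G → NPlace n A}

theorem stable_pointStabilizer (hP : M.IsRep P) (a : A) : M.Stable (pointStabilizer P a) :=
  fun x y hx hy => by
    rw [mem_pointStabilizer, hP.1, NPlace.comp_apply_of_mem hy]
    exact hx

theorem vUnitary_pointStabilizer (hP : M.IsRep P) (a : A) : M.VUnitary (pointStabilizer P a) :=
  fun x y hxy hy => by
    rwa [mem_pointStabilizer, hP.1, NPlace.comp_apply_of_mem hy] at hxy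

theorem R_mem_pointStabilizer (hP : M.IsRep P) (a : A) (i : Fin n) :
    ∀ x ∈ pointStabilizer P a, M.R i x ∈ pointStabilizer P a := fun x hx => by
  rw [mem_pointStabilizer, hP.2]
  exact Part.mem_map _ hx

end MengerSystem.IsRep

theorem MengerWAlgebra.IsRep.meetStable_pointStabilizer {n : ℕ} {G A : Type u}
    {M : MengerWAlgebra n G} {P : G → NPlace n A} (hP : M.IsRep P) (a : A) :
    M.MeetStable (pointStabilizer P a) := fun x hx y hy => by
  rw [mem_pointStabilizer, hP.2]
  exact NPlace.mem_inter hx hy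

namespace MengerSystem

variable {n : ℕ} {G : Type u} (M : MengerSystem n G)

theorem le_refl (x : G) : M.le x x := (M.A2 x).symm

theorem restrict_le (x z : G) : M.le (M.o x fun j => M.R j z) x := by
  unfold le
  simp only [M.A4]
  rw [← M.A1, M.A2]

variable {M}

theorem le_trans {x y z : G} (hxy : M.le x y) (hyz : M.le y z) : M.le x z := by
  unfold le at *
  calc x = M.o y (fun i => M.R i x) := hxy
    _ = M.o (M.o z fun i => M.R i y) (fun i => M.R i x) := by rw [← hyz]
    _ = M.o z (fun i => M.R i (M.o y fun j => M.R j x)) := by simp only [M.A1, M.A4]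
    _ = M.o z (fun i => M.R i x) := by rw [← hxy]

/-- To reach `g[z̄]` from `g[ȳ]` when each `zᵢ ≤ yᵢ`, replace one coordinate at a time: by (A3)
that replacement is the restriction by `zᵢ`. -/
theorem o_mem_of_restrict_mem {S : Set G} {g : G} {y z : Fin n → G}
    (hle : ∀ i, M.le (z i) (y i)) (hS : ∀ x ∈ S, ∀ i, (M.o x fun j => M.R j (z i)) ∈ S)
    (hy : M.o g y ∈ S) : M.o g z ∈ S := by
  suffices h : ∀ s : Finset (Fin n), M.o g (s.piecewise z y) ∈ S by
    simpa using h Finset.univ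
  intro s
  induction s using Finset.induction_on with
  | empty => simpa using hy
  | insert i s hi ih =>
    have hstep : M.o g ((insert i s).piecewise z y)
        = M.o (M.o g (s.piecewise z y)) fun j => M.R j (z i) :=
      calc M.o g ((insert i s).piecewise z y)
          = M.o g (Function.update (s.piecewise z y) i (M.o (y i) fun j => M.R j (z i))) := by
            rw [Finset.piecewise_insert, ← hle i]
        _ = M.o (M.o g (Function.update (s.piecewise z y) i (y i))) fun j => M.R j (z i) :=
            (M.A3 _ _ _ _ _).symm
        _ = M.o (M.o g (s.piecewise z y)) fun j => M.R j (z i) := by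
            rw [Function.update_eq_self_iff.2 (Finset.piecewise_eq_of_notMem _ _ _ hi).symm]
    rw [hstep]
    exact hS _ ih i

variable (M) in
theorem vRegular_le : M.VRegular M.le := fun g _ y hle =>
  M.o_mem_of_restrict_mem (S := {x | M.le x (M.o g y)}) hle
    (fun x hx _ => le_trans (M.restrict_le x _) hx) (M.le_refl _)

variable (M) in
/-- Read through a representation `P` with base point `a` and `H` its stabilizer: `g` lies here
iff `P g` is defined at `(a,…,a)`, because `P (Rᵢ g)` fixes `a` exactly there. -/
def definedSet (H : Set G) : Set G := {g | ∀ i, M.R i g ∈ H}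

variable {H : Set G}

theorem mem_definedSet_of_le (hv : M.VUnitary H) {x y : G} (hx : x ∈ M.definedSet H)
    (hxy : M.le x y) : y ∈ M.definedSet H := fun i =>
  hv _ _ (by rw [← M.A4, ← hxy]; exact hx i) hx

theorem restrict_mem_definedSet (hs : M.Stable H) {x z : G} (hx : x ∈ M.definedSet H)
    (hz : z ∈ M.definedSet H) : (M.o x fun j => M.R j z) ∈ M.definedSet H := fun i => by
  rw [M.A4]
  exact hs _ _ (hx i) hz

theorem mem_definedSet_of_o_mem (hv : M.VUnitary H) {x : G} {v : Fin n → G}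
    (h : M.o x v ∈ M.definedSet H) (i : Fin n) : v i ∈ M.definedSet H := fun j =>
  hv _ _ (by rw [← M.A4, ← M.A7, ← M.A6]; exact h j) h

end MengerSystem

namespace MengerWAlgebra

open MengerSystem

variable {n : ℕ} {G : Type u} {M : MengerWAlgebra n G} {H : Set G}

variable (M) in
theorem meet_le_left (x y : G) : M.le (M.meet x y) x := M.A9 x y

variable (M) in
theorem meet_le_right (x y : G) : M.le (M.meet x y) y := by
  rw [M.meet_comm]
  exact M.A9 y x

theorem meet_eq_left_of_le {x y : G} (h : M.le x y) : M.meet x y = x := by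
  rw [M.meet_comm]
  conv_lhs => rw [h]
  rw [M.A8, M.meet_idem, ← h]

variable (M H) in
/-- `x` and `y` are defined at the base point and take the same value there. -/
def Agree (x y : G) : Prop := M.meet x y ∈ M.definedSet H

theorem Agree.symm {x y : G} (h : M.Agree H x y) : M.Agree H y x := by
  rwa [Agree, M.meet_comm]

theorem Agree.left_mem (hv : M.VUnitary H) {x y : G} (h : M.Agree H x y) :
    x ∈ M.definedSet H :=
  mem_definedSet_of_le hv h (M.meet_le_left x y)

theorem Agree.right_mem (hv : M.VUnitary H) {x y : G} (h : M.Agree H x y) :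
    y ∈ M.definedSet H :=
  mem_definedSet_of_le hv h (M.meet_le_right x y)

theorem agree_of_le {x y : G} (hx : x ∈ M.definedSet H) (h : M.le x y) : M.Agree H x y := by
  rwa [Agree, meet_eq_left_of_le h]

theorem agree_self {x : G} (hx : x ∈ M.definedSet H) : M.Agree H x x :=
  agree_of_le hx (M.le_refl x)

theorem agree_of_le_of_le (hs : M.Stable H) {x y z : G} (hx : x ∈ M.definedSet H)
    (hy : y ∈ M.definedSet H) (hxz : M.le x z) (hyz : M.le y z) : M.Agree H x y := by
  have hmeet : M.meet x y = M.o x fun j => M.R j y := by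
    conv_lhs => rw [hyz]
    rw [M.A8, meet_eq_left_of_le hxz]
  rw [Agree, hmeet]
  exact restrict_mem_definedSet hs hx hy

theorem Agree.trans (hs : M.Stable H) (hv : M.VUnitary H) {x y z : G} (hxy : M.Agree H x y)
    (hyz : M.Agree H y z) : M.Agree H x z := by
  have h := agree_of_le_of_le hs hxy hyz (M.meet_le_right x y) (M.meet_le_left y z)
  rw [Agree, M.meet_assoc, ← M.meet_assoc y y z, M.meet_idem, M.meet_comm y z,
    ← M.meet_assoc] at h
  exact mem_definedSet_of_le hv h (M.meet_le_left _ _)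

theorem agree_o (hs : M.Stable H) (hv : M.VUnitary H) {g : G} {y y' : Fin n → G}
    (he : ∀ i, M.Agree H (y i) (y' i)) (hg : M.o g y ∈ M.definedSet H) :
    M.Agree H (M.o g y) (M.o g y') := by
  let z i := M.meet (y i) (y' i)
  have hz : M.o g z ∈ M.definedSet H :=
    o_mem_of_restrict_mem (fun i => M.meet_le_left _ _)
      (fun _ hx i => restrict_mem_definedSet hs hx (he i)) hg
  have hzy := agree_of_le hz (M.vRegular_le g z y fun i => M.meet_le_left _ _)
  have hzy' := agree_of_le hz (M.vRegular_le g z y' fun i => M.meet_le_right _ _)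
  exact hzy.symm.trans hs hv hzy'

theorem agree_iff_mem (hs : M.Stable H) (hm : M.MeetStable H) (hv : M.VUnitary H)
    (hr : ∀ i : Fin n, ∀ x ∈ H, M.R i x ∈ H) {h g : G} (hh : h ∈ H) :
    M.Agree H h g ↔ g ∈ H := by
  refine ⟨fun hhg => ?_, fun hg i => hr i _ (hm h hh g hg)⟩
  have hgh : M.meet g h ∈ H := by
    rw [M.meet_comm, M.A9]
    exact hs h _ hh hhg
  exact hv g _ (by rwa [← M.A9]) fun j => hr j _ hgh

variable (M H) in
def agreeSetoid (hs : M.Stable H) (hv : M.VUnitary H) : Setoid (M.definedSet H) where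
  r x y := M.Agree H x y
  iseqv := ⟨fun x => agree_self x.2, Agree.symm, fun hxy hyz => hxy.trans hs hv hyz⟩

variable (M H) in
/-- The carrier of the representation built from `H`: the class of `g` stands for the value of
`g` at the base point. -/
abbrev Value (hs : M.Stable H) (hv : M.VUnitary H) : Type u := Quotient (agreeSetoid M H hs hv)

variable {hs : M.Stable H} {hv : M.VUnitary H}

variable (hs hv) in
def valuePart (z : G) : Part (Value M H hs hv) :=
  ⟨z ∈ M.definedSet H, fun h => Quotient.mk _ ⟨z, h⟩⟩

theorem mk_mem_valuePart_iff {y z : G} (hy : y ∈ M.definedSet H) :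
    Quotient.mk _ ⟨y, hy⟩ ∈ valuePart hs hv z ↔ M.Agree H z y := by
  rw [valuePart, Part.mem_mk_iff]
  exact ⟨fun ⟨_, h⟩ => Quotient.exact h, fun h => ⟨h.left_mem hv, Quotient.sound h⟩⟩

theorem valuePart_eq_of_agree {z z' : G} (h : M.Agree H z z') :
    valuePart hs hv z = valuePart hs hv z' :=
  Part.ext' ⟨fun _ => h.right_mem hv, fun _ => h.left_mem hv⟩ fun _ _ => Quotient.sound h

theorem valuePart_eq_none {z : G} (hz : z ∉ M.definedSet H) : valuePart hs hv z = Part.none :=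
  Part.eq_none_iff'.2 hz

theorem valuePart_eq_valuePart_iff {z z' : G} (hz : z ∈ M.definedSet H) :
    valuePart hs hv z = valuePart hs hv z' ↔ M.Agree H z z' := by
  refine ⟨fun h => ?_, valuePart_eq_of_agree⟩
  have hmem := (mk_mem_valuePart_iff (hs := hs) (hv := hv) hz).2 (agree_self hz)
  rw [h, mk_mem_valuePart_iff] at hmem
  exact hmem.symm

theorem valuePart_meet (u u' : G) :
    valuePart hs hv (M.meet u u') =
      ⟨(valuePart hs hv u).Dom ∧ valuePart hs hv u = valuePart hs hv u',
        fun h => (valuePart hs hv u).get h.1⟩ := by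
  refine Part.ext' ⟨fun h => ?_, fun ⟨hu, h⟩ => (valuePart_eq_valuePart_iff hu).1 h⟩
    fun h _ => Quotient.sound (agree_of_le h (M.meet_le_left u u'))
  have hu := mem_definedSet_of_le hv h (M.meet_le_left u u')
  exact ⟨hu, (valuePart_eq_valuePart_iff hu).2 h⟩

theorem valuePart_o_congr {g : G} {y y' : Fin n → G} (he : ∀ i, M.Agree H (y i) (y' i)) :
    valuePart hs hv (M.o g y) = valuePart hs hv (M.o g y') := by
  by_cases hg : M.o g y ∈ M.definedSet H
  · exact valuePart_eq_of_agree (agree_o hs hv he hg)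
  · have hg' : M.o g y' ∉ M.definedSet H := fun hg' =>
      hg ((agree_o hs hv (fun i => (he i).symm) hg').right_mem hv)
    rw [valuePart_eq_none hg, valuePart_eq_none hg']

variable (hs hv) in
/-- The choice of representatives is immaterial by `valuePart_o_congr`. -/
noncomputable def rep (g : G) : NPlace n (Value M H hs hv) :=
  fun a => valuePart hs hv (M.o g fun i => (a i).out.1)

theorem rep_mk (g : G) (w : Fin n → G) (hw : ∀ i, w i ∈ M.definedSet H) :
    rep hs hv g (fun i => Quotient.mk _ ⟨w i, hw i⟩) = valuePart hs hv (M.o g w) :=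
  valuePart_o_congr fun i => Quotient.mk_out (s := agreeSetoid M H hs hv) ⟨w i, hw i⟩

theorem rep_o (x : G) (y : Fin n → G) :
    rep hs hv (M.o x y) = NPlace.comp (rep hs hv x) fun i => rep hs hv (y i) := by
  funext a
  let v i := M.o (y i) fun j => (a j).out.1
  have hA1 : rep hs hv (M.o x y) a = valuePart hs hv (M.o x v) :=
    congrArg (valuePart hs hv) (M.A1 _ _ _)
  by_cases hdef : ∀ i, v i ∈ M.definedSet H
  · rw [hA1, NPlace.comp_apply_of_mem (b := fun i => Quotient.mk _ ⟨v i, hdef i⟩)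
      fun i => ⟨hdef i, rfl⟩, rep_mk]
  · rw [hA1, NPlace.comp_apply_eq_none hdef,
      valuePart_eq_none fun h => hdef (mem_definedSet_of_o_mem hv h)]

theorem rep_R (i : Fin n) (x : G) : rep hs hv (M.R i x) = NPlace.Ri i (rep hs hv x) := by
  funext a
  let w j := (a j).out.1
  have hdom : M.o (M.R i x) w ∈ M.definedSet H ↔ M.o x w ∈ M.definedSet H :=
    forall_congr' fun j => by rw [M.A6 j i x w]
  have hle : M.le (M.o (M.R i x) w) (w i) := by
    rw [M.A7]
    exact M.restrict_le _ _
  refine Part.ext' hdom fun h _ => ?_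
  calc Quotient.mk _ ⟨M.o (M.R i x) w, h⟩ = Quotient.mk _ (a i).out :=
        Quotient.sound (agree_of_le h hle)
    _ = a i := Quotient.out_eq _

theorem rep_meet (x y : G) :
    rep hs hv (M.meet x y) = NPlace.inter (rep hs hv x) (rep hs hv y) :=
  funext fun _ => (congrArg (valuePart hs hv) (M.A10 _ _ _)).trans (valuePart_meet _ _)

theorem isRep_rep : M.IsRep (rep hs hv) := ⟨⟨rep_o, rep_R⟩, rep_meet⟩

theorem pointStabilizer_rep (hm : M.MeetStable H) (hr : ∀ i : Fin n, ∀ x ∈ H, M.R i x ∈ H)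
    {h : G} (hh : h ∈ H) :
    pointStabilizer (rep hs hv) (Quotient.mk _ ⟨h, fun i => hr i h hh⟩) = H := by
  have hD : h ∈ M.definedSet H := fun i => hr i h hh
  ext g
  calc g ∈ pointStabilizer (rep hs hv) (Quotient.mk _ ⟨h, hD⟩)
      ↔ Quotient.mk _ ⟨h, hD⟩ ∈ valuePart hs hv (M.o g fun _ => h) := by
        rw [mem_pointStabilizer, ← rep_mk g (fun _ => h) (fun _ => hD)]
    _ ↔ M.Agree H (M.o g fun _ => h) h := mk_mem_valuePart_iff hD
    _ ↔ (M.o g fun _ => h) ∈ H :=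
        ⟨fun hg => (agree_iff_mem hs hm hv hr hh).1 hg.symm,
          fun hg => ((agree_iff_mem hs hm hv hr hh).2 hg).symm⟩
    _ ↔ g ∈ H := ⟨fun hg => hv g _ hg fun _ => hh, fun hg => hs g _ hg fun _ => hh⟩

theorem isStabilizer_of_closed (hs : M.Stable H) (hm : M.MeetStable H) (hv : M.VUnitary H)
    (hr : ∀ i : Fin n, ∀ x ∈ H, M.R i x ∈ H) (hne : H.Nonempty) : M.IsStabilizer H := by
  obtain ⟨h, hh⟩ := hne
  exact ⟨_, rep hs hv, _, isRep_rep, (pointStabilizer_rep hm hr hh).symm⟩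

end MengerWAlgebra

/-- **Theorem 5.** A nonempty `H ⊆ G` is a stabilizer of a functional Menger
∧-algebra of rank `n` iff it is stable, ∧-stable and v-unitary with `Rᵢ H ⊆ H`
for every `i`. -/
theorem wAlgebra_stabilizer_iff' {n : ℕ} {G : Type u} (M : MengerWAlgebra n G)
    (H : Set G) (hH : H.Nonempty) :
    M.IsStabilizer H ↔
      (M.toMengerSystem.Stable H ∧ M.MeetStable H ∧
        M.toMengerSystem.VUnitary H ∧
        ∀ i : Fin n, ∀ x ∈ H, M.R i x ∈ H) := by
  constructor
  · rintro ⟨A, P, a, hP, rfl⟩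
    exact ⟨hP.1.stable_pointStabilizer a, hP.meetStable_pointStabilizer a,
      hP.1.vUnitary_pointStabilizer a, hP.1.R_mem_pointStabilizer a⟩
  · rintro ⟨hs, hm, hv, hr⟩
    exact MengerWAlgebra.isStabilizer_of_closed hs hm hv hr hH
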